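/- Let s, t ≥ 2 and consider the grid graph P_s □ P_t, where V(P_s) = {u_1,…,u_s} and V(P_t) = {v_1,…,v_t}. Set W_1 = {(u_1,v_1),(u_1,v_t)}, W_2 = {(u_1,v_1),(u_s,v_1)}, W_3 = {(u_1,v_t),(u_s,v_t)}, W_4 = {(u_s,v_1),(u_s,v_t)}. Then a set W of vertices with |W| = 2 is a resolving set of P_s □ P_t if and only if W = W_i for some i ∈ {1,2,3,4}. -/

import Mathlib

/-!
Distance in the grid is the ℓ¹ distance of the coordinates. If `{a, b}` resolves the grid, then
`a` and `b` share a coordinate, since otherwise the two neighbours of `a` that lie on the way to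
`b` are not told apart; the shared coordinate is an end of its path, since otherwise the two
neighbours of `a` along it are not told apart; and the other coordinates of `a` and `b` are the two
ends of their path, since otherwise a step moving `a` (or `b`) away from the other point is
confused with a sideways step. Conversely, for two corners on a common side the sum and the
difference of the two distances recover the two coordinates of a vertex.
-/

open SimpleGraph

def IsResolving {V : Type*} (G : SimpleGraph V) (W : Set V) : Prop :=
  ∀ x y : V, x ≠ y → ∃ z ∈ W, G.dist x z ≠ G.dist y z

section Resolving

variable {V : Type*} {G : SimpleGraph V} {a b : V}

theorem isResolving_pair_iff :
    IsResolving G {a, b} ↔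
      ∀ x y, G.dist x a = G.dist y a → G.dist x b = G.dist y b → x = y := by
  refine ⟨fun h x y hxa hxb => ?_, fun h x y hxy => ?_⟩
  · by_contra hxy
    obtain ⟨z, hz, hne⟩ := h x y hxy
    rcases hz with rfl | rfl <;> contradiction
  · by_contra! hall
    exact hxy (h x y (hall a (by simp)) (hall b (by simp)))

theorem IsResolving.eq_of_dist_eq (h : IsResolving G {a, b}) {x y : V}
    (hxa : G.dist x a = G.dist y a) (hxb : G.dist x b = G.dist y b) : x = y :=
  isResolving_pair_iff.1 h x y hxa hxb

theorem dist_boxProd_swap {W : Type*} {H : SimpleGraph W} (x y : V × W) :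
    (H □ G).dist x.swap y.swap = (G □ H).dist x y := by
  simp only [SimpleGraph.dist, edist_boxProd, Prod.fst_swap, Prod.snd_swap]
  rw [add_comm]

theorem IsResolving.boxProd_swap {W : Type*} {H : SimpleGraph W} {S : Set (V × W)}
    (h : IsResolving (G □ H) S) : IsResolving (H □ G) (Prod.swap '' S) := by
  intro x y hxy
  obtain ⟨z, hz, hne⟩ := h x.swap y.swap (by simpa using hxy)
  refine ⟨z.swap, Set.mem_image_of_mem _ hz, ?_⟩
  rwa [← Prod.swap_swap x, ← Prod.swap_swap y, dist_boxProd_swap, dist_boxProd_swap]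

theorem dist_boxProd {W : Type*} {H : SimpleGraph W} (hG : G.Preconnected)
    (hH : H.Preconnected) (x y : V × W) :
    (G □ H).dist x y = G.dist x.1 y.1 + H.dist x.2 y.2 := by
  have hxy : (G □ H).Reachable x y := reachable_boxProd.2 ⟨hG _ _, hH _ _⟩
  apply Nat.cast_injective (R := ℕ∞)
  rw [Nat.cast_add, hxy.coe_dist_eq_edist, (hG _ _).coe_dist_eq_edist,
    (hH _ _).coe_dist_eq_edist, edist_boxProd]

end Resolving

namespace Fin

variable {n : ℕ}

theorem exists_natDist_eq_one (hn : 2 ≤ n) (i : Fin n) : ∃ k : Fin n, Nat.dist k i = 1 := by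
  rcases Nat.eq_zero_or_pos i with h | h
  · exact ⟨⟨1, by omega⟩, by simp [Nat.dist]; omega⟩
  · exact ⟨⟨i - 1, by omega⟩, by simp [Nat.dist]; omega⟩

theorem exists_natDist_eq_one_of_ne {i j : Fin n} (hij : i ≠ j) :
    ∃ k : Fin n, Nat.dist k i = 1 ∧ Nat.dist k j + 1 = Nat.dist i j := by
  have hij : (i : ℕ) ≠ j := Fin.val_ne_of_ne hij
  rcases Nat.lt_or_gt_of_ne hij with h | h
  · exact ⟨⟨i + 1, by omega⟩, by simp [Nat.dist]; omega⟩
  · exact ⟨⟨i - 1, by omega⟩, by simp [Nat.dist]; omega⟩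

theorem natDist_eq_sub_one_of_no_outward_step {i j : Fin n}
    (hi : ∀ k : Fin n, Nat.dist k i = 1 → Nat.dist k j ≠ Nat.dist i j + 1)
    (hj : ∀ k : Fin n, Nat.dist k j = 1 → Nat.dist k i ≠ Nat.dist j i + 1) :
    Nat.dist i j = n - 1 := by
  wlog hij : (i : ℕ) ≤ j generalizing i j
  · rw [Nat.dist_comm]
    exact this hj hi (by omega)
  by_contra hne
  rcases Nat.eq_zero_or_pos i with h | h
  · exact hj ⟨j + 1, by simp [Nat.dist] at hne; omega⟩ (by simp [Nat.dist])
      (by simp [Nat.dist]; omega)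
  · exact hi ⟨i - 1, by omega⟩ (by simp [Nat.dist]; omega) (by simp [Nat.dist]; omega)

theorem natDist_add_natDist_eq_sub_one {p q : Fin n} (hpq : Nat.dist p q = n - 1) (i : Fin n) :
    Nat.dist i p + Nat.dist i q = n - 1 := by
  have := i.2; have := p.2; have := q.2
  simp only [Nat.dist] at *
  omega

theorem natDist_eq_sub_one_iff {p q : Fin n} :
    Nat.dist p q = n - 1 ↔
      (p : ℕ) = 0 ∧ (q : ℕ) = n - 1 ∨ (p : ℕ) = n - 1 ∧ (q : ℕ) = 0 := by
  have := p.2; have := q.2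
  rw [Nat.dist]
  omega

theorem eq_of_natDist_eq_of_val_eq_zero_or_sub_one {e i j : Fin n}
    (he : (e : ℕ) = 0 ∨ (e : ℕ) = n - 1) (h : Nat.dist i e = Nat.dist j e) : i = j := by
  have := i.2; have := j.2
  ext
  simp only [Nat.dist] at *
  omega

end Fin

section PathGraph

variable {n : ℕ}

theorem pathGraph_adj_iff_natDist {i j : Fin n} : (pathGraph n).Adj i j ↔ Nat.dist i j = 1 := by
  rw [pathGraph_adj, Nat.dist]
  omega

theorem natDist_le_length_of_walk_pathGraph {i j : Fin n} (p : (pathGraph n).Walk i j) :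
    Nat.dist i j ≤ p.length := by
  induction p with
  | nil => simp
  | @cons u v w huv p ih =>
    have := Nat.dist.triangle_inequality u v w
    rw [Walk.length_cons, pathGraph_adj_iff_natDist.1 huv] at *
    omega

theorem pathGraph_dist (i j : Fin n) : (pathGraph n).dist i j = Nat.dist i j := by
  refine le_antisymm ?_ ?_
  · induction hk : Nat.dist i j generalizing i with
    | zero => simp [Fin.ext (Nat.eq_of_dist_eq_zero hk)]
    | succ k ih =>
      obtain ⟨m, him, hmj⟩ := Fin.exists_natDist_eq_one_of_ne (i := i) (j := j)
        (fun h => by simp [h, Nat.dist_self] at hk)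
      have hadj : (pathGraph n).Adj i m := pathGraph_adj_iff_natDist.2 (by rwa [Nat.dist_comm])
      obtain ⟨p, hp⟩ := (pathGraph_preconnected n m j).exists_walk_length_eq_dist
      calc (pathGraph n).dist i j ≤ (Walk.cons hadj p).length := dist_le _
        _ = (pathGraph n).dist m j + 1 := by rw [Walk.length_cons, hp]
        _ ≤ k + 1 := by have := ih m (by omega); omega
  · obtain ⟨p, hp⟩ := (pathGraph_preconnected n i j).exists_walk_length_eq_dist
    exact hp ▸ natDist_le_length_of_walk_pathGraph p

end PathGraph

section Grid

variable {s t : ℕ} {a b : Fin s × Fin t}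

theorem grid_dist (x y : Fin s × Fin t) :
    (pathGraph s □ pathGraph t).dist x y = Nat.dist x.1 y.1 + Nat.dist x.2 y.2 := by
  rw [dist_boxProd (pathGraph_preconnected s) (pathGraph_preconnected t), pathGraph_dist,
    pathGraph_dist]

theorem IsResolving.fst_eq_or_snd_eq_of_grid
    (h : IsResolving (pathGraph s □ pathGraph t) {a, b}) : a.1 = b.1 ∨ a.2 = b.2 := by
  by_contra! hne
  obtain ⟨i, hia, hib⟩ := Fin.exists_natDist_eq_one_of_ne hne.1
  obtain ⟨j, hja, hjb⟩ := Fin.exists_natDist_eq_one_of_ne hne.2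
  have hij := h.eq_of_dist_eq (x := (i, a.2)) (y := (a.1, j))
    (by simp only [grid_dist, Nat.dist_self, hia, hja])
    (by simp only [grid_dist]; omega)
  obtain ⟨rfl, -⟩ := Prod.mk.inj hij
  simp [Nat.dist_self] at hia

theorem IsResolving.fst_eq_zero_or_sub_one_of_grid
    (h : IsResolving (pathGraph s □ pathGraph t) {a, b}) (h₁ : a.1 = b.1) :
    (a.1 : ℕ) = 0 ∨ (a.1 : ℕ) = s - 1 := by
  by_contra! hmid
  have hx := h.eq_of_dist_eq (x := (⟨a.1 - 1, by omega⟩, a.2)) (y := (⟨a.1 + 1, by omega⟩, a.2))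
    (by simp only [grid_dist, Nat.dist]; omega)
    (by simp only [grid_dist, ← h₁, Nat.dist]; omega)
  simp only [Prod.mk.injEq, Fin.mk.injEq] at hx
  omega

theorem IsResolving.no_outward_step_snd_of_grid (hs : 2 ≤ s)
    (h : IsResolving (pathGraph s □ pathGraph t) {a, b}) (h₁ : a.1 = b.1) (k : Fin t)
    (hk : Nat.dist k a.2 = 1) : Nat.dist k b.2 ≠ Nat.dist a.2 b.2 + 1 := by
  intro hkb
  obtain ⟨i, hi⟩ := Fin.exists_natDist_eq_one hs a.1
  have hx := h.eq_of_dist_eq (x := (a.1, k)) (y := (i, a.2))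
    (by simp only [grid_dist, Nat.dist_self, hi, hk])
    (by simp only [grid_dist, ← h₁, Nat.dist_self, hi, hkb]; omega)
  obtain ⟨rfl, -⟩ := Prod.mk.inj hx
  simp [Nat.dist_self] at hi

theorem IsResolving.ends_of_grid_of_fst_eq (hs : 2 ≤ s)
    (h : IsResolving (pathGraph s □ pathGraph t) {a, b}) (h₁ : a.1 = b.1) :
    ((a.1 : ℕ) = 0 ∨ (a.1 : ℕ) = s - 1) ∧ Nat.dist a.2 b.2 = t - 1 := by
  have h' : IsResolving (pathGraph s □ pathGraph t) {b, a} := Set.pair_comm a b ▸ h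
  exact ⟨h.fst_eq_zero_or_sub_one_of_grid h₁, Fin.natDist_eq_sub_one_of_no_outward_step
    (h.no_outward_step_snd_of_grid hs h₁) (h'.no_outward_step_snd_of_grid hs h₁.symm)⟩

theorem isResolving_pair_grid_of_fst_eq (h₁ : a.1 = b.1)
    (ha₁ : (a.1 : ℕ) = 0 ∨ (a.1 : ℕ) = s - 1) (h₂ : Nat.dist a.2 b.2 = t - 1) :
    IsResolving (pathGraph s □ pathGraph t) {a, b} := by
  rw [isResolving_pair_iff]
  intro x y hxa hxb
  rw [grid_dist, grid_dist] at hxa hxb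
  rw [← h₁] at hxb
  have hx := Fin.natDist_add_natDist_eq_sub_one h₂ x.2
  have hy := Fin.natDist_add_natDist_eq_sub_one h₂ y.2
  have hfst : x.1 = y.1 := Fin.eq_of_natDist_eq_of_val_eq_zero_or_sub_one ha₁ (by omega)
  rw [hfst] at hxa
  exact Prod.ext hfst (Fin.eq_of_natDist_eq_of_val_eq_zero_or_sub_one (e := a.2)
    (by have := Fin.natDist_eq_sub_one_iff.1 h₂; omega) (by omega))

theorem isResolving_pair_grid_iff (hs : 2 ≤ s) (ht : 2 ≤ t) :
    IsResolving (pathGraph s □ pathGraph t) {a, b} ↔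
      (a.1 = b.1 ∧ ((a.1 : ℕ) = 0 ∨ (a.1 : ℕ) = s - 1) ∧ Nat.dist a.2 b.2 = t - 1) ∨
      (a.2 = b.2 ∧ ((a.2 : ℕ) = 0 ∨ (a.2 : ℕ) = t - 1) ∧ Nat.dist a.1 b.1 = s - 1) := by
  constructor
  · intro h
    rcases h.fst_eq_or_snd_eq_of_grid with h₁ | h₂
    · exact Or.inl ⟨h₁, h.ends_of_grid_of_fst_eq hs h₁⟩
    · have hswap : IsResolving (pathGraph t □ pathGraph s) {a.swap, b.swap} := by
        simpa only [Set.image_pair] using h.boxProd_swap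
      exact Or.inr ⟨h₂, hswap.ends_of_grid_of_fst_eq ht h₂⟩
  · rintro (⟨h₁, h₂, h₃⟩ | ⟨h₁, h₂, h₃⟩)
    · exact isResolving_pair_grid_of_fst_eq h₁ h₂ h₃
    · simpa only [Set.image_pair, Prod.swap_swap] using
        (isResolving_pair_grid_of_fst_eq (a := a.swap) (b := b.swap) h₁ h₂ h₃).boxProd_swap

end Grid

theorem grid_basis_characterization (s t : ℕ) (hs : 2 ≤ s) (ht : 2 ≤ t)
    (W : Set (Fin s × Fin t)) (hcard : W.ncard = 2) :
    IsResolving (pathGraph s □ pathGraph t) W ↔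
      (W = {(⟨0, by omega⟩, ⟨0, by omega⟩), (⟨0, by omega⟩, ⟨t - 1, by omega⟩)} ∨
       W = {(⟨0, by omega⟩, ⟨0, by omega⟩), (⟨s - 1, by omega⟩, ⟨0, by omega⟩)} ∨
       W = {(⟨0, by omega⟩, ⟨t - 1, by omega⟩), (⟨s - 1, by omega⟩, ⟨t - 1, by omega⟩)} ∨
       W = {(⟨s - 1, by omega⟩, ⟨0, by omega⟩), (⟨s - 1, by omega⟩, ⟨t - 1, by omega⟩)}) := by
  obtain ⟨a, b, -, rfl⟩ := Set.ncard_eq_two.1 hcard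
  rw [isResolving_pair_grid_iff hs ht]
  simp only [Fin.natDist_eq_sub_one_iff, Set.pair_eq_pair_iff, Prod.ext_iff, Fin.ext_iff]
  constructor
  · rintro (⟨h₁, h₂ | h₂, h₃ | h₃⟩ | ⟨h₁, h₂ | h₂, h₃ | h₃⟩) <;> simp_all
  · rintro ((h | h) | (h | h) | (h | h) | h | h) <;> simp_all
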